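/- arXiv:2002.09174 — 4 statements merged into one kernel-verified Lean document; each statement's English description precedes it below -/
import Mathlib

section
/- Let N be a positive real number, M ∈ [N, ∞] an extended real number, and γ > 0. Let X₁, X₂, … be i.i.d. real random variables that are 1-subgaussian with mean zero, and let μ̂ₙ = (1/n)·∑_{s=1}^n X_s. Then P(∃ n ∈ ℕ with N ≤ n ≤ M such that μ̂ₙ + γ ≤ 0) ≤ exp(−Nγ²/2). -/
/-!
For `γ > 0` the process `exp (-γ ∑_{i<n} Xᵢ - n γ² / 2)` is a product of independent factors
`exp (-γ Xᵢ - γ² / 2)`, each of mean at most `1` by the subgaussian bound, hence a nonnegative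
supermartingale started at `1`. If `μ̂ₙ + γ ≤ 0` for some `n ≥ N`, this process reaches
`exp (N γ² / 2)`, and Ville's maximal inequality bounds the probability of that by
`exp (-N γ² / 2)`.
-/

open MeasureTheory ProbabilityTheory Real
open scoped ENNReal

/-- `Z` is 1-subgaussian: `E[exp(λZ − λE[Z])] ≤ exp(λ²/2)` for all `λ ∈ ℝ`
(with the integrability of the moment generating function). -/
def IsOneSubgaussian {Ω : Type*} [MeasurableSpace Ω] (μ : Measure Ω) (Z : Ω → ℝ) : Prop :=
  Integrable Z μ ∧ ∀ l : ℝ,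
    Integrable (fun ω => Real.exp (l * Z ω - l * (∫ ω', Z ω' ∂μ))) μ ∧
    (∫ ω, Real.exp (l * Z ω - l * (∫ ω', Z ω' ∂μ)) ∂μ) ≤ Real.exp (l ^ 2 / 2)

open Finset

namespace IsOneSubgaussian

variable {Ω : Type*} [MeasurableSpace Ω] {μ : Measure Ω} {Z : Ω → ℝ}

theorem integrable_exp_mul_sub (h : IsOneSubgaussian μ Z) (hZ : μ[Z] = 0) (l : ℝ) :
    Integrable (fun ω ↦ exp (l * Z ω - l ^ 2 / 2)) μ := by
  simpa [hZ, exp_sub] using (h.2 l).1.div_const (exp (l ^ 2 / 2))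

theorem integral_exp_mul_sub_le_one (h : IsOneSubgaussian μ Z) (hZ : μ[Z] = 0) (l : ℝ) :
    μ[fun ω ↦ exp (l * Z ω - l ^ 2 / 2)] ≤ 1 := by
  simpa [hZ, exp_sub, integral_div, div_le_one (exp_pos _)] using (h.2 l).2

end IsOneSubgaussian

namespace MeasureTheory.Supermartingale

variable {Ω : Type*} {m0 : MeasurableSpace Ω} {μ : Measure Ω} [IsFiniteMeasure μ]
  {𝒢 : Filtration ℕ m0} {f : ℕ → Ω → ℝ} {c : ℝ}

theorem maximal_ineq (hf : Supermartingale f 𝒢 μ) (hf_nonneg : 0 ≤ f) (hc : 0 < c)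
    (n : ℕ) : μ {ω | ∃ k ≤ n, c ≤ f k ω} ≤ ENNReal.ofReal (μ[f 0] / c) := by
  set A := {ω | ∃ k ≤ n, c ≤ f k ω}
  set τ : Ω → ℕ∞ := fun ω ↦ (hittingBtwn f {y | c ≤ y} 0 n ω : ℕ)
  have hτ : IsStoppingTime 𝒢 τ :=
    hf.stronglyAdapted.adapted.isStoppingTime_hittingBtwn measurableSet_Ici
  have hτ_le : ∀ ω, τ ω ≤ n := fun ω ↦ WithTop.coe_le_coe.2 (hittingBtwn_le ω)
  have hf_int : Integrable (stoppedValue f τ) μ :=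
    integrable_neg_iff.1 (hf.neg.integrable_stoppedValue hτ hτ_le)
  have hA : MeasurableSet A := by
    have : A = ⋃ k ≤ n, {ω | c ≤ f k ω} := by ext; simp [A]
    exact this ▸ MeasurableSet.biUnion (Set.to_countable _) fun k _ ↦
      measurableSet_le measurable_const ((hf.stronglyMeasurable k).measurable.le (𝒢.le k))
  have hc_le : ∀ ω ∈ A, c ≤ stoppedValue f τ ω := fun ω ⟨k, hk, hck⟩ ↦
    stoppedValue_hittingBtwn_mem ⟨k, ⟨Nat.zero_le _, hk⟩, hck⟩
  have h_stop : μ[stoppedValue f τ] ≤ μ[f 0] := by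
    have := hf.neg.expected_stoppedValue_mono (isStoppingTime_const 𝒢 0) hτ
      (fun ω ↦ WithTop.coe_le_coe.2 (Nat.zero_le _)) hτ_le
    simpa [stoppedValue, integral_neg] using this
  have : c * μ.real A ≤ μ[f 0] := calc
    c * μ.real A ≤ ∫ ω in A, stoppedValue f τ ω ∂μ :=
      setIntegral_ge_of_const_le_real hA (measure_ne_top _ _) hc_le hf_int.integrableOn
    _ ≤ μ[stoppedValue f τ] :=
      setIntegral_le_integral hf_int (.of_forall fun ω ↦ hf_nonneg _ ω)
    _ ≤ μ[f 0] := h_stop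
  rw [← ofReal_measureReal]
  exact ENNReal.ofReal_le_ofReal ((le_div_iff₀' hc).2 this)

theorem ville_ineq (hf : Supermartingale f 𝒢 μ) (hf_nonneg : 0 ≤ f) (hc : 0 < c) :
    μ {ω | ∃ k, c ≤ f k ω} ≤ ENNReal.ofReal (μ[f 0] / c) := by
  have h_union : {ω | ∃ k, c ≤ f k ω} = ⋃ n, {ω | ∃ k ≤ n, c ≤ f k ω} := by
    ext ω; simp only [Set.mem_ofPred_eq, Set.mem_iUnion]
    exact ⟨fun ⟨k, hk⟩ ↦ ⟨k, k, le_rfl, hk⟩, fun ⟨_, k, _, hk⟩ ↦ ⟨k, hk⟩⟩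
  have h_mono : Monotone fun n ↦ {ω | ∃ k ≤ n, c ≤ f k ω} :=
    fun _ _ hnm _ ⟨k, hk, hck⟩ ↦ ⟨k, hk.trans hnm, hck⟩
  rw [h_union, h_mono.measure_iUnion]
  exact iSup_le (hf.maximal_ineq hf_nonneg hc)

end MeasureTheory.Supermartingale

namespace MeasureTheory

variable {Ω : Type*} {m0 : MeasurableSpace Ω}

def Filtration.strictNatural {ι β : Type*} [Preorder ι] [MeasurableSpace β]
    (g : ι → Ω → β) (hg : ∀ i, Measurable (g i)) : Filtration ι m0 where
  seq n := ⨆ i < n, MeasurableSpace.comap (g i) inferInstance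
  mono' _ _ hnm := biSup_mono fun _ hi ↦ hi.trans_le hnm
  le' _ := iSup₂_le fun i _ ↦ (hg i).comap_le

end MeasureTheory

namespace ProbabilityTheory.iIndepFun

variable {Ω : Type*} {m0 : MeasurableSpace Ω} {μ : Measure Ω} [IsFiniteMeasure μ]

theorem supermartingale_prod {g : ℕ → Ω → ℝ}
    (hg_meas : ∀ i, Measurable (g i)) (hg : iIndepFun g μ) (hg_nonneg : ∀ i ω, 0 ≤ g i ω)
    (hg_int : ∀ i, Integrable (g i) μ) (hg_le : ∀ i, μ[g i] ≤ 1) :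
    Supermartingale (fun n ω ↦ ∏ i ∈ range n, g i ω)
      (Filtration.strictNatural g hg_meas) μ := by
  set ℱ := Filtration.strictNatural g hg_meas
  set P : ℕ → Ω → ℝ := fun n ω ↦ ∏ i ∈ range n, g i ω
  have h_indep n : Indep (MeasurableSpace.comap (g n) inferInstance) (ℱ n) μ := by
    have := indep_iSup_of_disjoint (fun i ↦ (hg_meas i).comap_le)
      ((iIndepFun_iff_iIndep _ _ _).1 hg) (S := {n}) (T := Set.Iio n) (by simp)
    simp only [Set.mem_singleton_iff, iSup_iSup_eq_left, Set.mem_Iio] at this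
    exact this
  have hP_meas n : Measurable[ℱ n] (P n) :=
    Finset.measurable_prod _ fun i hi ↦ measurable_iff_comap_le.2 <|
      le_iSup₂ (f := fun i (_ : i < n) ↦ MeasurableSpace.comap (g i) inferInstance) i
        (mem_range.1 hi)
  have hP_succ n : P (n + 1) = P n * g n := funext fun ω ↦ prod_range_succ _ _
  have h_indepFun n : IndepFun (P n) (g n) μ :=
    (IndepFun_iff_Indep _ _ _).2 <|
      indep_of_indep_of_le_left (h_indep n).symm (measurable_iff_comap_le.1 (hP_meas n))
  have hP_int n : Integrable (P n) μ := by
    induction n with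
    | zero => simp [P]
    | succ n ih => rw [hP_succ]; exact (h_indepFun n).integrable_mul ih (hg_int n)
  refine supermartingale_nat (fun n ↦ (hP_meas n).stronglyMeasurable) hP_int fun n ↦ ?_
  have h_pull : μ[P n * g n | ℱ n] =ᵐ[μ] P n * μ[g n | ℱ n] :=
    condExp_mul_of_stronglyMeasurable_left (hP_meas n).stronglyMeasurable
      (hP_succ n ▸ hP_int (n + 1)) (hg_int n)
  have h_indep_condExp : μ[g n | ℱ n] =ᵐ[μ] fun _ ↦ μ[g n] :=
    condExp_indep_eq (hg_meas n).comap_le (ℱ.le n) (comap_measurable (g n)).stronglyMeasurable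
      (h_indep n)
  rw [hP_succ]
  filter_upwards [h_pull, h_indep_condExp] with ω h₁ h₂
  rw [h₁, Pi.mul_apply, h₂]
  exact mul_le_of_le_one_right (prod_nonneg fun i _ ↦ hg_nonneg i ω) (hg_le n)

end ProbabilityTheory.iIndepFun

theorem le_neg_mul_sub_of_div_add_nonpos {s γ N : ℝ} {n : ℕ} (hγ : 0 < γ) (hN : N ≤ n)
    (h : s / n + γ ≤ 0) : N * γ ^ 2 / 2 ≤ -γ * s - n * γ ^ 2 / 2 := by
  rcases n.eq_zero_or_pos with rfl | hn
  · -- `s / 0 = 0`, so `h` says `γ ≤ 0`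
    simp at h; linarith
  have hs : s ≤ -γ * n := by
    have := (div_le_iff₀ (Nat.cast_pos.2 hn)).1 (by linarith : s / n ≤ -γ); linarith
  nlinarith

theorem stmt0_general {Ω : Type*} [MeasurableSpace Ω] (μ : Measure Ω) [IsProbabilityMeasure μ]
    (X : ℕ → Ω → ℝ) (hmeas : ∀ i, Measurable (X i))
    (hindep : iIndepFun X μ)
    (hsub : ∀ i, IsOneSubgaussian μ (X i))
    (hmean : ∀ i, (∫ ω, X i ω ∂μ) = 0)
    (N : ℝ) (M : ℝ≥0∞)
    (γ : ℝ) (hγ : 0 < γ) :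
    μ {ω | ∃ n : ℕ, N ≤ (n : ℝ) ∧ (n : ℝ≥0∞) ≤ M ∧
        (∑ s ∈ Finset.range n, X s ω) / n + γ ≤ 0} ≤
      ENNReal.ofReal (Real.exp (-(N * γ ^ 2) / 2)) := by
  set g : ℕ → Ω → ℝ := fun i ω ↦ exp (-γ * X i ω - (-γ) ^ 2 / 2)
  have hg_meas i : Measurable (g i) := by fun_prop (disch := exact hmeas i)
  have hg_indep : iIndepFun g μ :=
    hindep.comp (fun _ x ↦ exp (-γ * x - (-γ) ^ 2 / 2)) fun _ ↦ by fun_prop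
  have hP := hg_indep.supermartingale_prod hg_meas (fun _ _ ↦ (exp_pos _).le)
    (fun i ↦ (hsub i).integrable_exp_mul_sub (hmean i) _)
    (fun i ↦ (hsub i).integral_exp_mul_sub_le_one (hmean i) _)
  have h_incl : {ω | ∃ n : ℕ, N ≤ (n : ℝ) ∧ (n : ℝ≥0∞) ≤ M ∧
      (∑ s ∈ range n, X s ω) / n + γ ≤ 0} ⊆
        {ω | ∃ n, exp (N * γ ^ 2 / 2) ≤ ∏ i ∈ range n, g i ω} := by
    rintro ω ⟨n, hNn, -, hn⟩
    refine ⟨n, ?_⟩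
    rw [← exp_sum, exp_le_exp, sum_sub_distrib, ← mul_sum, sum_const, card_range, nsmul_eq_mul,
      neg_sq, mul_div_assoc']
    exact le_neg_mul_sub_of_div_add_nonpos hγ hNn hn
  calc _ ≤ _ := measure_mono h_incl
    _ ≤ _ := hP.ville_ineq (fun n ω ↦ prod_nonneg fun i _ ↦ (exp_pos _).le) (exp_pos _)
    _ = _ := by simp [← exp_neg, neg_div]

/-- Maximal inequality: if `X₁, X₂, …` are i.i.d. 1-subgaussian with mean zero,
`μ̂ₙ` their empirical mean, `N > 0` a real, `M ∈ [N, ∞]` an extended real and `γ > 0`, then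
`P(∃ n ∈ ℕ, N ≤ n ≤ M, μ̂ₙ + γ ≤ 0) ≤ exp(−Nγ²/2)`. -/
theorem stmt0 {Ω : Type*} [MeasurableSpace Ω] (μ : Measure Ω) [IsProbabilityMeasure μ]
    (X : ℕ → Ω → ℝ) (hmeas : ∀ i, Measurable (X i))
    (hindep : iIndepFun X μ)
    (hident : ∀ i, IdentDistrib (X i) (X 0) μ μ)
    (hsub : ∀ i, IsOneSubgaussian μ (X i))
    (hmean : ∀ i, (∫ ω, X i ω ∂μ) = 0)
    (N : ℝ) (hN : 0 < N) (M : ℝ≥0∞) (hM : ENNReal.ofReal N ≤ M)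
    (γ : ℝ) (hγ : 0 < γ) :
    μ {ω | ∃ n : ℕ, N ≤ (n : ℝ) ∧ (n : ℝ≥0∞) ≤ M ∧
        (∑ s ∈ Finset.range n, X s ω) / n + γ ≤ 0} ≤
      ENNReal.ofReal (Real.exp (-(N * γ ^ 2) / 2)) :=
  stmt0_general μ X hmeas hindep hsub hmean N M γ hγ
end

section
/- Let N be a positive integer. Let X₁, X₂, … be i.i.d. 1-subgaussian real random variables and Y₁, Y₂, … be i.i.d. 1-subgaussian real random variables, independent of the X's, with E[X₁] > E[Y₁]. Set Δ = E[X₁ − Y₁] and μ̂ₜ = (1/t)·∑_{n=1}^t (Xₙ − Yₙ). Then P(∃ s ≥ 1 : μ̂ₛ + √((8/s)·log⁺(N/s)) ≤ 0) ≤ 15/(N·Δ²). -/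
/-!
Peeling with an exponential supermartingale. Write `Zₙ = Δ - (Xₙ - Yₙ)`: these are independent,
centred and 2-subgaussian, so for every `λ` the process `exp (λ (Z₁ + ⋯ + Zₛ) - s λ²)` is a
nonnegative supermartingale, and Ville's inequality bounds the probability that it ever exceeds
`e^β` by `e^{-β}`. If the event holds at a time `s ∈ [2ᵏ, 2ᵏ⁺¹)`, then, with
`Lₖ = log⁺ (N / 2ᵏ⁺¹)`, the choice `λₖ = Δ/2 + √(Lₖ / 2ᵏ)` makes that process exceed
`exp (2ᵏ Δ² / 4 + 3 Lₖ / 2)`. A union bound over the blocks leaves the series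
`∑ₖ exp (-2ᵏ Δ² / 4 - 3 Lₖ / 2)`: for `2ᵏ⁺¹ ≤ N` its terms are `z^{3/2} e^{-z} / c^{3/2}` with
`z = 2ᵏ⁺¹ Δ² / 8` and `c = N Δ² / 8`, which telescope against `e^{-z/2} - e^{-z}`, and the
remaining terms are dominated by a geometric series in `e^{-c}`.
-/

open MeasureTheory ProbabilityTheory Real
open scoped ENNReal

/-- `log⁺ x = max {0, log x}`. -/
noncomputable def logPlus (x : ℝ) : ℝ := max 0 (Real.log x)

open Finset
open scoped NNReal

namespace MeasureTheory.Supermartingale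

variable {Ω : Type*} {m0 : MeasurableSpace Ω} {μ : Measure Ω} [IsFiniteMeasure μ]
  {𝓕 : Filtration ℕ m0} {M : ℕ → Ω → ℝ}

theorem mul_measureReal_exists_le_le (hM : Supermartingale M 𝓕 μ) (hnonneg : 0 ≤ M)
    (ε : ℝ) (n : ℕ) : ε * μ.real {ω | ∃ k ≤ n, ε ≤ M k ω} ≤ μ[M 0] := by
  set τ : Ω → ℕ∞ := fun ω ↦ (hittingBtwn M {y | ε ≤ y} 0 n ω : ℕ)
  have hτ : IsStoppingTime 𝓕 τ :=
    hM.stronglyAdapted.adapted.isStoppingTime_hittingBtwn measurableSet_Ici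
  have hτ_le : ∀ ω, τ ω ≤ n := fun ω ↦ by
    simpa [τ] using hittingBtwn_le (u := M) (s := {y | ε ≤ y}) (n := 0) (m := n) ω
  have hE : MeasurableSet {ω | ∃ k ≤ n, ε ≤ M k ω} := by
    simp only [← exists_prop, Set.ofPred_exists]
    exact .iUnion fun k ↦ .iUnion fun _ ↦ measurableSet_le measurable_const
      ((hM.stronglyMeasurable k).measurable.mono (𝓕.le k) le_rfl)
  have hint := integrable_stoppedValue ℕ hτ hM.integrable hτ_le
  -- optional stopping for the submartingale `-M` between the times `0 ≤ τ`
  have hstop : μ[stoppedValue M τ] ≤ μ[M 0] := by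
    have := hM.neg.expected_stoppedValue_mono (isStoppingTime_const 𝓕 0) hτ
      (fun ω ↦ bot_le) hτ_le
    simpa [stoppedValue, integral_neg] using this
  calc ε * μ.real {ω | ∃ k ≤ n, ε ≤ M k ω}
      ≤ ∫ ω in {ω | ∃ k ≤ n, ε ≤ M k ω}, stoppedValue M τ ω ∂μ := by
        refine setIntegral_ge_of_const_le_real hE (measure_ne_top μ _)
          (fun ω ⟨k, hk, hεk⟩ ↦ ?_) hint.integrableOn
        exact stoppedValue_hittingBtwn_mem (s := {y | ε ≤ y}) ⟨k, ⟨Nat.zero_le k, hk⟩, hεk⟩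
    _ ≤ μ[stoppedValue M τ] := setIntegral_le_integral hint (.of_forall fun ω ↦ hnonneg _ ω)
    _ ≤ μ[M 0] := hstop

/-- **Ville's inequality**. -/
theorem measure_exists_le_le (hM : Supermartingale M 𝓕 μ) (hnonneg : 0 ≤ M)
    {ε : ℝ} (hε : 0 < ε) : μ {ω | ∃ k, ε ≤ M k ω} ≤ ENNReal.ofReal (μ[M 0] / ε) := by
  have hunion : {ω | ∃ k, ε ≤ M k ω} = ⋃ n, {ω | ∃ k ≤ n, ε ≤ M k ω} := by
    ext ω
    simp only [Set.mem_ofPred_eq, Set.mem_iUnion]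
    exact ⟨fun ⟨k, hk⟩ ↦ ⟨k, k, le_rfl, hk⟩, fun ⟨_, k, _, hk⟩ ↦ ⟨k, hk⟩⟩
  have hmono : Monotone fun n ↦ {ω | ∃ k ≤ n, ε ≤ M k ω} :=
    fun m n hmn ω ⟨k, hk, hεk⟩ ↦ ⟨k, hk.trans hmn, hεk⟩
  rw [hunion, hmono.measure_iUnion]
  refine iSup_le fun n ↦ ?_
  rw [← ofReal_measureReal]
  refine ENNReal.ofReal_le_ofReal ?_
  rw [le_div_iff₀ hε, mul_comm]
  exact hM.mul_measureReal_exists_le_le hnonneg ε n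

end MeasureTheory.Supermartingale

lemma integral_exp_mul_sub_le_one {Ω : Type*} {m0 : MeasurableSpace Ω} {μ : Measure Ω}
    {Z : Ω → ℝ} {l ψ : ℝ} (hmgf : mgf Z μ l ≤ exp ψ) :
    μ[fun ω ↦ exp (l * Z ω - ψ)] ≤ 1 := by
  have : μ[fun ω ↦ exp (l * Z ω - ψ)] = exp (-ψ) * mgf Z μ l := by
    simp only [mgf, sub_eq_add_neg, exp_add, ← integral_const_mul, mul_comm]
  rw [this, exp_neg, inv_mul_le_one₀ (exp_pos ψ)]
  exact hmgf

section ExpSupermartingale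

variable {Ω : Type*} {m0 : MeasurableSpace Ω} {μ : Measure Ω} [IsProbabilityMeasure μ]
  {𝓕 : Filtration ℕ m0} {Z : ℕ → Ω → ℝ} {l ψ : ℝ}

theorem supermartingale_exp_sum (hZ : StronglyAdapted 𝓕 Z)
    (hindep : ∀ n, Indep (MeasurableSpace.comap (Z (n + 1)) inferInstance) (𝓕 n) μ)
    (hint : ∀ n, Integrable (fun ω ↦ exp (l * Z n ω)) μ) (hmgf : ∀ n, mgf (Z n) μ l ≤ exp ψ) :
    Supermartingale (fun n ω ↦ exp (l * ∑ i ∈ range (n + 1), Z i ω - (n + 1) * ψ)) 𝓕 μ := by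
  set M : ℕ → Ω → ℝ := fun n ω ↦ exp (l * ∑ i ∈ range (n + 1), Z i ω - (n + 1) * ψ)
  set R : ℕ → Ω → ℝ := fun n ω ↦ exp (l * Z n ω - ψ)
  have hM_succ : ∀ n, M (n + 1) = M n * R (n + 1) := fun n ↦ by
    ext ω
    simp only [M, R, Pi.mul_apply, ← exp_add, sum_range_succ]
    push_cast; ring_nf
  have hR_int : ∀ n, Integrable (R n) μ := fun n ↦ by
    simpa [R, sub_eq_add_neg, exp_add, mul_comm] using (hint n).const_mul (exp (-ψ))
  have hM_meas : ∀ n, Measurable[𝓕 n] (M n) := fun n ↦ by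
    have hZ_le : ∀ i ∈ range (n + 1), Measurable[𝓕 n] (Z i) := fun i hi ↦
      ((hZ i).mono (𝓕.mono (Nat.lt_succ_iff.mp (mem_range.mp hi)))).measurable
    exact ((measurable_const.mul (Finset.measurable_sum _ hZ_le)).sub measurable_const).exp
  have hR_meas : ∀ n, Measurable[MeasurableSpace.comap (Z n) inferInstance] (R n) := fun n ↦
    ((measurable_const.mul (comap_measurable (Z n))).sub measurable_const).exp
  have hMR_indep : ∀ n, IndepFun (M n) (R (n + 1)) μ := fun n ↦ by
    rw [IndepFun_iff_Indep]
    exact indep_of_indep_of_le_left (indep_of_indep_of_le_right (hindep n).symm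
      (hR_meas (n + 1)).comap_le) (hM_meas n).comap_le
  have hM_int : ∀ n, Integrable (M n) μ := by
    intro n
    induction n with
    | zero => simpa [M, R] using hR_int 0
    | succ n ih => rw [hM_succ]; exact (hMR_indep n).integrable_mul ih (hR_int _)
  refine supermartingale_nat (fun n ↦ (hM_meas n).stronglyMeasurable) hM_int fun n ↦ ?_
  have hle : MeasurableSpace.comap (Z (n + 1)) inferInstance ≤ m0 :=
    ((hZ (n + 1)).measurable.mono (𝓕.le _) le_rfl).comap_le
  calc μ[M (n + 1) | 𝓕 n] =ᵐ[μ] M n * μ[R (n + 1) | 𝓕 n] := by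
        rw [hM_succ]
        exact condExp_mul_of_stronglyMeasurable_left (hM_meas n).stronglyMeasurable
          (hM_succ n ▸ hM_int (n + 1)) (hR_int _)
    _ =ᵐ[μ] M n * fun _ ↦ μ[R (n + 1)] :=
        (condExp_indep_eq hle (𝓕.le n) (hR_meas _).stronglyMeasurable (hindep n)).mul_left
    _ ≤ᵐ[μ] M n := .of_forall fun ω ↦
        mul_le_of_le_one_right (exp_pos _).le (integral_exp_mul_sub_le_one (hmgf _))

theorem measure_exists_le_mul_sum_sub_le (hZ : StronglyAdapted 𝓕 Z)
    (hindep : ∀ n, Indep (MeasurableSpace.comap (Z (n + 1)) inferInstance) (𝓕 n) μ)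
    {c : ℝ≥0} (hsub : ∀ n, HasSubgaussianMGF (Z n) c μ) (l β : ℝ) :
    μ {ω | ∃ n, β ≤ l * ∑ i ∈ range (n + 1), Z i ω - (n + 1) * (c * l ^ 2 / 2)} ≤
      ENNReal.ofReal (exp (-β)) := by
  have hM := supermartingale_exp_sum hZ hindep (fun n ↦ (hsub n).integrable_exp_mul l)
    (fun n ↦ (hsub n).mgf_le l)
  calc _ ≤ μ {ω | ∃ n, exp β ≤
          exp (l * ∑ i ∈ range (n + 1), Z i ω - (n + 1) * (c * l ^ 2 / 2))} := by
        simp only [exp_le_exp]; rfl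
    _ ≤ ENNReal.ofReal (exp (-β)) := by
        refine (hM.measure_exists_le_le (fun n ω ↦ (exp_pos _).le) (exp_pos β)).trans ?_
        rw [exp_neg, ← one_div]
        gcongr
        simpa using integral_exp_mul_sub_le_one ((hsub 0).mgf_le l)

end ExpSupermartingale

section PairFiltration

variable {Ω : Type*} {m0 : MeasurableSpace Ω} {μ : Measure Ω} {X Y : ℕ → Ω → ℝ}

lemma comap_prodMk_le_biSup_sumElim (n : ℕ) {S : Set (ℕ ⊕ ℕ)} (hl : Sum.inl n ∈ S)
    (hr : Sum.inr n ∈ S) :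
    MeasurableSpace.comap (fun ω ↦ (X n ω, Y n ω)) inferInstance ≤
      ⨆ j ∈ S, MeasurableSpace.comap (Sum.elim X Y j) inferInstance := by
  refine (MeasurableSpace.comap_prodMk (X n) (Y n)).trans_le (sup_le ?_ ?_)
  exacts [le_biSup (fun j ↦ MeasurableSpace.comap (Sum.elim X Y j) _) hl,
    le_biSup (fun j ↦ MeasurableSpace.comap (Sum.elim X Y j) _) hr]

theorem ProbabilityTheory.iIndepFun.indep_comap_prodMk_natural (hX : ∀ n, Measurable (X n))
    (hY : ∀ n, Measurable (Y n)) (h : iIndepFun (Sum.elim X Y) μ) {m n : ℕ} (hmn : m < n) :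
    Indep (MeasurableSpace.comap (fun ω ↦ (X n ω, Y n ω)) inferInstance)
      (Filtration.natural (fun n ω ↦ (X n ω, Y n ω))
        (fun n ↦ ((hX n).prodMk (hY n)).stronglyMeasurable) m) μ := by
  let time : ℕ ⊕ ℕ → ℕ := Sum.elim id id
  have hmeas : ∀ j, Measurable (Sum.elim X Y j) := fun j ↦ by cases j <;> simp [hX, hY]
  refine indep_of_indep_of_le (indep_iSup_of_disjoint (fun j ↦ (hmeas j).comap_le) h.iIndep
    (S := {j | time j = n}) (T := {j | time j ≤ m}) ?_) ?_ ?_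
  · exact Set.disjoint_left.mpr fun j (hj : time j = n) (hj' : time j ≤ m) ↦ by omega
  · exact comap_prodMk_le_biSup_sumElim n rfl rfl
  · exact iSup₂_le fun k hk ↦ comap_prodMk_le_biSup_sumElim k (show k ≤ m from hk) hk

end PairFiltration

section Subgaussian

variable {Ω : Type*} {m0 : MeasurableSpace Ω} {μ : Measure Ω}

lemma IsOneSubgaussian.hasSubgaussianMGF {Z : Ω → ℝ} (h : IsOneSubgaussian μ Z) :
    HasSubgaussianMGF (fun ω ↦ Z ω - μ[Z]) 1 μ where
  integrable_exp_mul t := by simpa only [mul_sub] using (h.2 t).1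
  mgf_le t := by simpa [mgf, mul_sub] using (h.2 t).2

lemma IsOneSubgaussian.hasSubgaussianMGF_sub {X Y : Ω → ℝ} (hX : IsOneSubgaussian μ X)
    (hY : IsOneSubgaussian μ Y) (hXY : IndepFun X Y μ) :
    HasSubgaussianMGF (fun ω ↦ (μ[X] - μ[Y]) - (X ω - Y ω)) 2 μ := by
  have hindep : IndepFun (-fun ω ↦ X ω - μ[X]) (fun ω ↦ Y ω - μ[Y]) μ :=
    hXY.comp (measurable_id.sub_const _).neg (measurable_id.sub_const _)
  convert hX.hasSubgaussianMGF.neg.add_of_indepFun hY.hasSubgaussianMGF hindep using 1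
  · ext ω; simp only [Pi.neg_apply]; ring
  · norm_num

theorem measure_exists_le_mul_sum_sub_sq_le [IsProbabilityMeasure μ] {X Y : ℕ → Ω → ℝ}
    (hX : ∀ n, Measurable (X n)) (hY : ∀ n, Measurable (Y n)) (hindep : iIndepFun (Sum.elim X Y) μ)
    (hsubX : ∀ n, IsOneSubgaussian μ (X n)) (hsubY : ∀ n, IsOneSubgaussian μ (Y n)) {Δ : ℝ}
    (hΔ : ∀ n, Δ = μ[X n] - μ[Y n]) (l β : ℝ) :
    μ {ω | ∃ n, β ≤ l * ∑ i ∈ range (n + 1), (Δ - (X i ω - Y i ω)) - (n + 1) * l ^ 2} ≤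
      ENNReal.ofReal (exp (-β)) := by
  set 𝓕 := Filtration.natural (fun n ω ↦ (X n ω, Y n ω))
    (fun n ↦ ((hX n).prodMk (hY n)).stronglyMeasurable)
  set Z : ℕ → Ω → ℝ := fun n ω ↦ Δ - (X n ω - Y n ω)
  have hZ_adapted : StronglyAdapted 𝓕 Z := fun n ↦ by
    have hP := (Filtration.stronglyAdapted_natural
      (fun n ↦ ((hX n).prodMk (hY n)).stronglyMeasurable) n).measurable
    exact (measurable_const.sub (hP.fst.sub hP.snd)).stronglyMeasurable
  have hZ_indep : ∀ n, Indep (MeasurableSpace.comap (Z (n + 1)) inferInstance) (𝓕 n) μ := by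
    intro n
    have hP := comap_measurable (fun ω ↦ (X (n + 1) ω, Y (n + 1) ω)) (m := inferInstance)
    exact indep_of_indep_of_le_left (hindep.indep_comap_prodMk_natural hX hY n.lt_succ_self)
      (measurable_const.sub (hP.fst.sub hP.snd)).comap_le
  have hZ_sub : ∀ n, HasSubgaussianMGF (Z n) 2 μ := fun n ↦ by
    simpa only [Z, ← hΔ n] using (hsubX n).hasSubgaussianMGF_sub (hsubY n)
      (hindep.indepFun (show Sum.inl n ≠ Sum.inr n by simp))
  convert measure_exists_le_mul_sum_sub_le hZ_adapted hZ_indep hZ_sub l β using 7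
  push_cast; ring

end Subgaussian

section Peeling

lemma logPlus_nonneg (x : ℝ) : 0 ≤ logPlus x := le_max_left _ _

lemma logPlus_le_logPlus {x y : ℝ} (hx : 0 ≤ x) (hxy : x ≤ y) : logPlus x ≤ logPlus y := by
  rcases hx.eq_or_lt with rfl | hx
  · simp [logPlus]
  · exact max_le_max le_rfl (log_le_log hx hxy)

noncomputable def blockLog (N k : ℕ) : ℝ := logPlus (N / 2 ^ (k + 1))

noncomputable def blockRate (N : ℕ) (Δ : ℝ) (k : ℕ) : ℝ := Δ / 2 + √(blockLog N k / 2 ^ k)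

noncomputable def blockThreshold (N : ℕ) (Δ : ℝ) (k : ℕ) : ℝ :=
  2 ^ k * Δ ^ 2 / 4 + 3 / 2 * blockLog N k

lemma threshold_le_rate_mul_sub_rate_sq {Δ u s L : ℝ} (hΔ : 0 ≤ Δ) (hu : 0 < u) (hL : 0 ≤ L)
    (hus : u ≤ s) (hsu : s ≤ 2 * u) :
    u * Δ ^ 2 / 4 + 3 / 2 * L ≤
      (Δ / 2 + √(L / u)) * (s * Δ + √(8 * s * L)) - s * (Δ / 2 + √(L / u)) ^ 2 := by
  obtain ⟨p, hp, rfl⟩ : ∃ p, 0 < p ∧ u = p ^ 2 := ⟨√u, sqrt_pos.2 hu, (sq_sqrt hu.le).symm⟩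
  obtain ⟨t, ht, rfl⟩ : ∃ t, 0 ≤ t ∧ s = t ^ 2 :=
    ⟨√s, sqrt_nonneg s, (sq_sqrt (by linarith)).symm⟩
  obtain ⟨r, hr, rfl⟩ : ∃ r, 0 ≤ r ∧ L = r ^ 2 * p ^ 2 :=
    ⟨√(L / p ^ 2), sqrt_nonneg _, by rw [sq_sqrt (by positivity)]; field_simp⟩
  set c := √2
  have hc2 : c ^ 2 = 2 := sq_sqrt zero_le_two
  have hc0 : 0 ≤ c := sqrt_nonneg 2
  have hpt : p ≤ t := by nlinarith
  have htp : t ≤ c * p :=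
    (pow_le_pow_iff_left₀ ht (by positivity) two_ne_zero).1 (by rw [mul_pow, hc2]; linarith)
  have hsqrt_ratio : √(r ^ 2 * p ^ 2 / p ^ 2) = r := by
    rw [mul_div_cancel_right₀ _ (by positivity), sqrt_sq hr]
  have hsqrt_prod : √(8 * t ^ 2 * (r ^ 2 * p ^ 2)) = 2 * c * t * p * r := by
    rw [show 8 * t ^ 2 * (r ^ 2 * p ^ 2) = (2 * c * t * p * r) ^ 2 by
      linear_combination (4 * t ^ 2 * r ^ 2 * p ^ 2) * hc2.symm]
    exact sqrt_sq (by positivity)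
  have hc54 : 5 / 4 ≤ c := by nlinarith
  -- `2ctp − t² − 3p²/2 = p²/2 − (cp − t)²` is nonnegative for `p ≤ t ≤ cp` since `(c - 1)² ≤ 1/2`
  have hgap : (c * p - t) ^ 2 ≤ p ^ 2 / 2 := by nlinarith
  rw [hsqrt_ratio, hsqrt_prod]
  nlinarith [mul_nonneg (mul_nonneg hc0 hΔ) (mul_nonneg (mul_nonneg ht hp.le) hr),
    mul_nonneg (sq_nonneg r) (sub_nonneg.2 hgap),
    mul_nonneg (sq_nonneg Δ) (sub_nonneg.2 (pow_le_pow_left₀ hp.le hpt 2))]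

lemma blockThreshold_le_of_mean_add_sqrt_nonpos {N : ℕ} {Δ : ℝ} (hΔ : 0 ≤ Δ) {D : ℕ → ℝ}
    {s : ℕ} (hs : 1 ≤ s) (h : (∑ n ∈ range s, D n) / s + √((8 / s) * logPlus (N / s)) ≤ 0) :
    blockThreshold N Δ (Nat.log 2 s) ≤ blockRate N Δ (Nat.log 2 s) * ∑ n ∈ range s, (Δ - D n)
      - s * blockRate N Δ (Nat.log 2 s) ^ 2 := by
  set k := Nat.log 2 s
  have hs0 : (0 : ℝ) < s := by exact_mod_cast hs
  have hks : (2 : ℝ) ^ k ≤ s := by exact_mod_cast Nat.pow_log_le_self 2 (by omega)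
  have hsk : (s : ℝ) < 2 ^ (k + 1) := by exact_mod_cast Nat.lt_pow_succ_log_self one_lt_two s
  have hL : blockLog N k ≤ logPlus (N / s) :=
    logPlus_le_logPlus (by positivity) (div_le_div_of_nonneg_left (by positivity) hs0 hsk.le)
  have hsum : √(8 * s * blockLog N k) ≤ -∑ n ∈ range s, D n := by
    have hscale : s * √((8 / s) * logPlus (N / s)) = √(8 * s * logPlus (N / s)) := by
      rw [← sqrt_sq hs0.le, ← sqrt_mul (sq_nonneg _), sqrt_sq hs0.le]
      congr 1; field_simp
    calc √(8 * s * blockLog N k) ≤ √(8 * s * logPlus (N / s)) := by gcongr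
      _ = s * √((8 / s) * logPlus (N / s)) := hscale.symm
      _ ≤ -∑ n ∈ range s, D n := by
        rw [← le_div_iff₀' hs0, neg_div]
        linarith
  have hrate : 0 ≤ blockRate N Δ k := by unfold blockRate; positivity
  have hT : s * Δ + √(8 * s * blockLog N k) ≤ ∑ n ∈ range s, (Δ - D n) := by
    rw [sum_sub_distrib, sum_const, card_range, nsmul_eq_mul]; linarith
  calc blockThreshold N Δ k
      ≤ blockRate N Δ k * (s * Δ + √(8 * s * blockLog N k)) - s * blockRate N Δ k ^ 2 :=
        threshold_le_rate_mul_sub_rate_sq hΔ (by positivity) (logPlus_nonneg _) hks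
          (by rw [pow_succ] at hsk; linarith)
    _ ≤ _ := by gcongr

end Peeling

section BlockSeries

lemma mul_sqrt_mul_exp_neg_le {z : ℝ} (hz : 0 ≤ z) :
    z * √z * exp (-z) ≤ 7 / 4 * (exp (-(z / 2)) - exp (-z)) := by
  obtain ⟨w, hw, rfl⟩ : ∃ w, 0 ≤ w ∧ z = w ^ 2 := ⟨√z, sqrt_nonneg z, (sq_sqrt hz).symm⟩
  have hcubic : 1 + w ^ 2 / 2 + (w ^ 2 / 2) ^ 2 / 2 + (w ^ 2 / 2) ^ 3 / 6 ≤ exp (w ^ 2 / 2) := by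
    have := sum_le_exp_of_nonneg (x := w ^ 2 / 2) (by positivity) 4
    simp only [sum_range_succ, sum_range_zero, Nat.factorial] at this
    norm_num at this
    linarith
  have hpoly : w ^ 3 ≤ 7 / 4 * (w ^ 2 / 2 + (w ^ 2 / 2) ^ 2 / 2 + (w ^ 2 / 2) ^ 3 / 6) := by
    nlinarith [sq_nonneg (w - 1), sq_nonneg (w ^ 2 - 7 / 5 * w), mul_nonneg hw (sq_nonneg (w - 1))]
  have hsplit : exp (-(w ^ 2 / 2)) - exp (-w ^ 2) = exp (-w ^ 2) * (exp (w ^ 2 / 2) - 1) := by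
    rw [mul_sub, ← exp_add]; ring_nf
  rw [sqrt_sq hw, hsplit]
  nlinarith [exp_pos (-w ^ 2)]

lemma exp_neg_blockThreshold_le_of_lt_log {N k : ℕ} {Δ : ℝ} (hΔ : Δ ≠ 0)
    (hk : k < Nat.log 2 N) :
    exp (-blockThreshold N Δ k) ≤
      7 / 4 * (exp (-(2 ^ k * Δ ^ 2 / 8)) - exp (-(2 ^ (k + 1) * Δ ^ 2 / 8))) /
        (N * Δ ^ 2 / 8 * √(N * Δ ^ 2 / 8)) := by
  set z : ℝ := 2 ^ (k + 1) * Δ ^ 2 / 8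
  set c : ℝ := N * Δ ^ 2 / 8
  have hN : N ≠ 0 := by rintro rfl; simp at hk
  have hz : 0 < z := by positivity
  have hc : 0 < c := by positivity
  have h2N : (2 : ℝ) ^ (k + 1) ≤ N := by
    exact_mod_cast (Nat.pow_le_pow_right two_pos hk).trans (Nat.pow_log_le_self 2 hN)
  -- on these blocks `log⁺ (N / 2^(k+1)) = log (c / z)`
  have hratio : z / c = (N / 2 ^ (k + 1) : ℝ)⁻¹ := by
    simp only [z, c]; field_simp
  have hlog : exp (-blockLog N k) = z / c := by
    rw [blockLog, logPlus, max_eq_right (log_nonneg ((one_le_div (by positivity)).2 h2N)),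
      exp_neg, exp_log (by positivity), hratio]
  have hβ : exp (-blockThreshold N Δ k) = z * √z * exp (-z) / (c * √c) := by
    have hhalf : exp (-blockThreshold N Δ k) = exp (-z) * exp (-blockLog N k) *
        √(exp (-blockLog N k)) := by
      rw [← exp_half, ← exp_add, ← exp_add, blockThreshold]; congr 1; simp only [z]; ring
    rw [hhalf, hlog, sqrt_div hz.le]
    field_simp
  rw [hβ, show 2 ^ k * Δ ^ 2 / 8 = z / 2 by simp only [z]; ring]
  exact div_le_div_of_nonneg_right (mul_sqrt_mul_exp_neg_le hz.le) (by positivity)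

lemma sum_exp_neg_blockThreshold_le (N : ℕ) {Δ : ℝ} (hΔ : Δ ≠ 0) :
    ∑ k ∈ range (Nat.log 2 N), exp (-blockThreshold N Δ k) ≤
      7 / 4 / (N * Δ ^ 2 / 8 * √(N * Δ ^ 2 / 8)) := by
  set f : ℕ → ℝ := fun k ↦ exp (-(2 ^ k * Δ ^ 2 / 8))
  calc ∑ k ∈ range (Nat.log 2 N), exp (-blockThreshold N Δ k)
      ≤ ∑ k ∈ range (Nat.log 2 N), 7 / 4 * (f k - f (k + 1)) /
          (N * Δ ^ 2 / 8 * √(N * Δ ^ 2 / 8)) :=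
        sum_le_sum fun k hk ↦ exp_neg_blockThreshold_le_of_lt_log hΔ (mem_range.1 hk)
    _ = 7 / 4 * (f 0 - f (Nat.log 2 N)) / (N * Δ ^ 2 / 8 * √(N * Δ ^ 2 / 8)) := by
        rw [← sum_div, ← mul_sum, sum_range_sub']
    _ ≤ 7 / 4 / (N * Δ ^ 2 / 8 * √(N * Δ ^ 2 / 8)) := by
        have hf0 : f 0 ≤ 1 := exp_le_one_iff.2 (by simp only [pow_zero]; nlinarith [sq_nonneg Δ])
        gcongr
        linarith [exp_pos (-(2 ^ Nat.log 2 N * Δ ^ 2 / 8))]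

lemma exp_neg_blockThreshold_log_add_le (N j : ℕ) (Δ : ℝ) :
    exp (-blockThreshold N Δ (j + Nat.log 2 N)) ≤ exp (-(N * Δ ^ 2 / 8)) ^ (j + 1) := by
  have hpow : N * (j + 1) ≤ 2 * 2 ^ (j + Nat.log 2 N) := by
    calc N * (j + 1) ≤ 2 ^ (Nat.log 2 N + 1) * 2 ^ j :=
          Nat.mul_le_mul (Nat.lt_pow_succ_log_self one_lt_two N).le Nat.lt_two_pow_self
      _ = 2 * 2 ^ (j + Nat.log 2 N) := by ring
  have hpow' : (N : ℝ) * (j + 1) ≤ 2 * 2 ^ (j + Nat.log 2 N) := by exact_mod_cast hpow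
  rw [← exp_nat_mul, exp_le_exp, blockThreshold, blockLog]
  push_cast
  nlinarith [logPlus_nonneg (N / 2 ^ (j + Nat.log 2 N + 1) : ℝ),
    mul_le_mul_of_nonneg_right hpow' (sq_nonneg Δ)]

lemma inv_exp_sub_one_le {c : ℝ} (hc : 15 / 8 ≤ c) : (exp c - 1)⁻¹ ≤ 3 / 8 / c := by
  have hquartic := sum_le_exp_of_nonneg (x := c) (by linarith) 5
  simp only [sum_range_succ, sum_range_zero, Nat.factorial] at hquartic
  norm_num at hquartic
  rw [inv_le_comm₀ (by nlinarith) (by positivity), inv_div]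
  nlinarith [mul_nonneg (sub_nonneg.2 hc) (by positivity : (0 : ℝ) ≤ c ^ 2)]

theorem tsum_exp_neg_blockThreshold_le {N : ℕ} {Δ : ℝ} (h : 15 < N * Δ ^ 2) :
    Summable (fun k ↦ exp (-blockThreshold N Δ k)) ∧
      ∑' k, exp (-blockThreshold N Δ k) ≤ 15 / (N * Δ ^ 2) := by
  set c : ℝ := N * Δ ^ 2 / 8
  have hc : 15 / 8 < c := by simp only [c]; linarith
  have hΔ : Δ ≠ 0 := by rintro rfl; norm_num at h
  set q := exp (-c)
  have hq1 : q < 1 := exp_lt_one_iff.2 (by linarith)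
  have hgeom : HasSum (fun j : ℕ ↦ q ^ (j + 1)) (exp c - 1)⁻¹ := by
    have hsum : (1 - q)⁻¹ * q = (exp c - 1)⁻¹ := by
      have : exp c - 1 ≠ 0 := (sub_pos.2 (one_lt_exp_iff.2 (by linarith))).ne'
      simp only [q, exp_neg]; field_simp
    have := (hasSum_geometric_of_lt_one (r := q) (exp_pos _).le hq1).mul_right q
    rw [hsum] at this
    simpa only [← pow_succ] using this
  have htail : Summable fun j ↦ exp (-blockThreshold N Δ (j + Nat.log 2 N)) :=
    hgeom.summable.of_nonneg_of_le (fun _ ↦ (exp_pos _).le)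
      (exp_neg_blockThreshold_log_add_le N · Δ)
  have hsummable : Summable fun k ↦ exp (-blockThreshold N Δ k) :=
    (summable_nat_add_iff (f := fun k ↦ exp (-blockThreshold N Δ k)) _).1 htail
  refine ⟨hsummable, ?_⟩
  have hsqrt : 7 / 6 ≤ √c := le_sqrt_of_sq_le (by linarith)
  calc ∑' k, exp (-blockThreshold N Δ k)
      = ∑ k ∈ range (Nat.log 2 N), exp (-blockThreshold N Δ k) +
          ∑' j, exp (-blockThreshold N Δ (j + Nat.log 2 N)) :=
        (hsummable.sum_add_tsum_nat_add _).symm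
    _ ≤ 7 / 4 / (c * √c) + 3 / 8 / c := by
        gcongr
        · exact sum_exp_neg_blockThreshold_le N hΔ
        · exact (htail.tsum_le_tsum (exp_neg_blockThreshold_log_add_le N · Δ)
            hgeom.summable).trans (hgeom.tsum_eq ▸ inv_exp_sub_one_le hc.le)
    _ ≤ 15 / (N * Δ ^ 2) := by
        rw [show N * Δ ^ 2 = 8 * c by simp only [c]; ring,
          div_add_div _ _ (by positivity) (by positivity),
          div_le_div_iff₀ (by positivity) (by positivity)]
        nlinarith [mul_pos (by linarith : (0:ℝ) < c) (by linarith : (0:ℝ) < c)]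

end BlockSeries

/-- Let `N` be a positive integer, `X₁, X₂, …` i.i.d. 1-subgaussian, `Y₁, Y₂, …` i.i.d.
1-subgaussian and independent of the `X`'s, with `E[X₁] > E[Y₁]`, `Δ = E[X₁ − Y₁]`, and
`μ̂ₜ = (1/t)·∑_{n=1}^t (Xₙ − Yₙ)`.  Then
`P(∃ s ≥ 1 : μ̂ₛ + √((8/s)·log⁺(N/s)) ≤ 0) ≤ 15/(N·Δ²)`. -/
theorem stmt1 {Ω : Type*} [MeasurableSpace Ω] (μ : Measure Ω) [IsProbabilityMeasure μ]
    (X Y : ℕ → Ω → ℝ) (hmeasX : ∀ i, Measurable (X i)) (hmeasY : ∀ i, Measurable (Y i))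
    (hindep : iIndepFun (Sum.elim X Y) μ)
    (hidentX : ∀ i, IdentDistrib (X i) (X 0) μ μ)
    (hidentY : ∀ i, IdentDistrib (Y i) (Y 0) μ μ)
    (hsubX : ∀ i, IsOneSubgaussian μ (X i))
    (hsubY : ∀ i, IsOneSubgaussian μ (Y i))
    (hgt : (∫ ω, Y 0 ω ∂μ) < ∫ ω, X 0 ω ∂μ)
    (N : ℕ) (hN : 0 < N)
    (Δ : ℝ) (hΔ : Δ = ∫ ω, (X 0 ω - Y 0 ω) ∂μ) :
    μ {ω | ∃ s : ℕ, 1 ≤ s ∧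
        (∑ n ∈ Finset.range s, (X n ω - Y n ω)) / s
          + Real.sqrt ((8 / s) * logPlus ((N : ℝ) / s)) ≤ 0} ≤
      ENNReal.ofReal (15 / (N * Δ ^ 2)) := by
  have hΔ_eq : ∀ n, Δ = μ[X n] - μ[Y n] := fun n ↦ by
    rw [hΔ, integral_sub (hsubX 0).1 (hsubY 0).1, (hidentX n).integral_eq,
      (hidentY n).integral_eq]
  have hΔ_pos : 0 < Δ := by linarith [hΔ_eq 0]
  rcases le_or_gt (N * Δ ^ 2 : ℝ) 15 with hsmall | hbig
  · exact prob_le_one.trans (ENNReal.one_le_ofReal.2 ((one_le_div (by positivity)).2 hsmall))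
  have hcover : {ω | ∃ s : ℕ, 1 ≤ s ∧ (∑ n ∈ range s, (X n ω - Y n ω)) / s
        + √((8 / s) * logPlus ((N : ℝ) / s)) ≤ 0} ⊆
      ⋃ k, {ω | ∃ n, blockThreshold N Δ k ≤ blockRate N Δ k *
        ∑ i ∈ range (n + 1), (Δ - (X i ω - Y i ω)) - (n + 1) * blockRate N Δ k ^ 2} := by
    rintro ω ⟨s, hs, hω⟩
    obtain ⟨n, rfl⟩ : ∃ n, s = n + 1 := ⟨s - 1, by omega⟩
    refine Set.mem_iUnion.2 ⟨Nat.log 2 (n + 1), n, ?_⟩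
    exact_mod_cast blockThreshold_le_of_mean_add_sqrt_nonpos hΔ_pos.le hs hω
  obtain ⟨hsummable, hsum_le⟩ := tsum_exp_neg_blockThreshold_le hbig
  calc _ ≤ ∑' k, ENNReal.ofReal (exp (-blockThreshold N Δ k)) :=
        (measure_mono hcover).trans <| (measure_iUnion_le _).trans <| ENNReal.tsum_le_tsum
          fun k ↦ measure_exists_le_mul_sum_sub_sq_le hmeasX hmeasY hindep hsubX hsubY hΔ_eq _ _
    _ = ENNReal.ofReal (∑' k, exp (-blockThreshold N Δ k)) :=
        (ENNReal.ofReal_tsum_of_nonneg (fun _ ↦ (exp_pos _).le) hsummable).symm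
    _ ≤ ENNReal.ofReal (15 / (N * Δ ^ 2)) := ENNReal.ofReal_le_ofReal hsum_le
end

section
/- For every real number L ≥ 0, the improper integral ∫_{2√L}^{∞} exp(−x²/(4(L + x))) dx is at most 2√L + 4. -/
/-!
For `x ≥ 2√L` one has `x² / (4(L + x)) ≥ x / (2(√L + 2))` (after clearing denominators this is
`2√L · x (x - 2√L) ≥ 0`), so the integrand is dominated by `exp (-x / (2(√L + 2)))`, whose
integral over `[2√L, ∞)` is at most `2(√L + 2)`.
-/

open MeasureTheory Real Set

theorem div_le_sq_div_of_two_sqrt_le {L x : ℝ} (hL : 0 ≤ L) (hx : 2 * √L ≤ x) :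
    x / (2 * (√L + 2)) ≤ x ^ 2 / (4 * (L + x)) := by
  have hs := sqrt_nonneg L
  have hx0 : 0 ≤ x := by linarith
  rcases hx0.eq_or_lt with rfl | hxpos
  · simp
  rw [div_le_div_iff₀ (by positivity) (by positivity)]
  nlinarith [sq_sqrt hL, mul_nonneg (mul_nonneg hs hxpos.le) (sub_nonneg.mpr hx)]

/-- For every real `L ≥ 0`, `∫_{2√L}^∞ exp(−x²/(4(L + x))) dx ≤ 2√L + 4`. -/
theorem stmt9 (L : ℝ) (hL : 0 ≤ L) :
    (∫ x in Set.Ici (2 * Real.sqrt L), Real.exp (-(x ^ 2) / (4 * (L + x))))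
      ≤ 2 * Real.sqrt L + 4 := by
  set b := 1 / (2 * (√L + 2))
  have hb : 0 < b := by positivity
  rw [integral_Ici_eq_integral_Ioi]
  calc (∫ x in Ioi (2 * √L), exp (-(x ^ 2) / (4 * (L + x))))
      ≤ ∫ x in Ioi (2 * √L), exp (-b * x) := by
        refine setIntegral_mono_of_nonneg (fun x _ ↦ (exp_pos _).le) (fun x hx ↦ ?_)
          (exp_neg_integrableOn_Ioi _ hb)
        rw [exp_le_exp, neg_div, neg_mul, neg_le_neg_iff, one_div_mul_eq_div]
        exact div_le_sq_div_of_two_sqrt_le hL hx.le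
    _ = exp (-b * (2 * √L)) / b := by
        rw [integral_exp_mul_Ioi (neg_neg_iff_pos.mpr hb), neg_div_neg_eq]
    _ ≤ 1 / b := by
        gcongr
        exact exp_le_one_iff.mpr (by nlinarith [sqrt_nonneg L])
    _ = 2 * √L + 4 := by simp only [b, one_div_one_div]; ring
end

section
/- For all real numbers δ > 0 and γ ≥ 0, ∑_{n=⌈γ⌉}^{∞} exp(−δ²·(√n − √γ)²/2) ≤ 1 + 2/δ² + √(2πγ)/δ. -/
/-!
The summand `f x = exp (-(δ²/2) (√x - √γ)²)` is antitone on `[γ, ∞)`, so the sum is at most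
its first term, which is `≤ 1`, plus `∫_γ^∞ f`. The substitution `x = (u + √γ)²` turns this
integral into `∫_0^∞ (2u + 2√γ) exp (-(δ²/2) u²) du = 2/δ² + √γ · √(2π)/δ`.
-/

open Real Finset

theorem tsum_subtype_le_of_forall_sum_Icc_le {g : ℕ → ℝ} {m : ℕ} {B : ℝ}
    (hg : ∀ n, 0 ≤ g n) (h : ∀ N, m ≤ N → ∑ n ∈ Icc m N, g n ≤ B) :
    ∑' n : {n : ℕ // m ≤ n}, g n ≤ B := by
  have hB : 0 ≤ B := (sum_nonneg fun n _ => hg n).trans (h m le_rfl)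
  refine tsum_le_of_sum_le' hB fun s => ?_
  set N := max m (s.sup Subtype.val)
  have hsub : s.map (.subtype _) ⊆ Icc m N := by
    intro n hn
    obtain ⟨k, hk, rfl⟩ := mem_map.mp hn
    exact mem_Icc.mpr ⟨k.2, le_max_of_le_right (le_sup (f := Subtype.val) hk)⟩
  calc ∑ k ∈ s, g k = ∑ n ∈ s.map (.subtype _), g n := by rw [sum_map]; rfl
    _ ≤ ∑ n ∈ Icc m N, g n := sum_le_sum_of_subset_of_nonneg hsub fun n _ _ => hg n
    _ ≤ B := h N (le_max_left _ _)

theorem AntitoneOn.sum_Icc_le_add_integral {f : ℝ → ℝ} {m N : ℕ} (hmN : m ≤ N)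
    (hf : AntitoneOn f (Set.Icc (m : ℝ) N)) :
    ∑ n ∈ Icc m N, f n ≤ f m + ∫ x in (m : ℝ)..N, f x := by
  rw [Icc_eq_cons_Ioc hmN, sum_cons, ← Ico_add_one_add_one_eq_Ioc,
    ← map_add_right_Ico _ _ 1, sum_map]
  exact add_le_add_right (hf.sum_le_integral_Ico hmN) _

theorem integral_mul_exp_neg_mul_sq_le {a : ℝ} (ha : 0 < a) (b : ℝ) :
    ∫ u in (0 : ℝ)..b, u * exp (-a * u ^ 2) ≤ 1 / (2 * a) := by
  have hderiv : ∀ u ∈ Set.uIcc (0 : ℝ) b,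
      HasDerivAt (fun u => -(1 / (2 * a)) * exp (-a * u ^ 2)) (u * exp (-a * u ^ 2)) u := by
    intro u _
    refine ((((hasDerivAt_pow 2 u).const_mul (-a)).exp).const_mul _).congr_deriv ?_
    field_simp
    norm_num
  rw [intervalIntegral.integral_eq_sub_of_hasDerivAt hderiv
    (Continuous.intervalIntegrable (by fun_prop) _ _)]
  have : 0 < 1 / (2 * a) * exp (-a * b ^ 2) := by positivity
  simp only [zero_pow two_ne_zero, mul_zero, exp_zero]
  linarith

theorem integral_exp_neg_mul_sq_le {a b : ℝ} (ha : 0 < a) (hb : 0 ≤ b) :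
    ∫ u in (0 : ℝ)..b, exp (-a * u ^ 2) ≤ √(π / a) / 2 := by
  rw [intervalIntegral.integral_of_le hb, ← integral_gaussian_Ioi a]
  exact MeasureTheory.setIntegral_mono_set (integrable_exp_neg_mul_sq ha).integrableOn
    (.of_forall fun _ => (exp_pos _).le) (.of_forall Set.Ioc_subset_Ioi_self)

theorem integral_comp_sqrt_sub {g : ℝ → ℝ} (hg : Continuous g) {b c : ℝ} (hb : 0 ≤ b)
    (hc : 0 ≤ c) :
    ∫ x in c ^ 2..(b + c) ^ 2, g (√x - c) = ∫ u in (0 : ℝ)..b, 2 * (u + c) * g u := by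
  have hderiv : ∀ u ∈ Set.uIcc (0 : ℝ) b,
      HasDerivAt (fun u => (u + c) ^ 2) (2 * (u + c)) u := by
    intro u _
    simpa using ((hasDerivAt_id u).add_const c).fun_pow 2
  have hsubst := intervalIntegral.integral_deriv_smul_comp hderiv (by fun_prop)
    (g := fun x => g (√x - c)) (by fun_prop)
  simp only [zero_add, Function.comp_apply, smul_eq_mul] at hsubst
  rw [← hsubst]
  refine intervalIntegral.integral_congr fun u hu => ?_
  rw [Set.uIcc_of_le hb] at hu
  simp only [sqrt_sq (by linarith [hu.1] : 0 ≤ u + c), add_sub_cancel_right]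

theorem integral_exp_neg_mul_sq_sqrt_sub_le {a c : ℝ} (ha : 0 < a) (hc : 0 ≤ c) {N : ℝ}
    (hN : c ^ 2 ≤ N) :
    ∫ x in c ^ 2..N, exp (-a * (√x - c) ^ 2) ≤ 1 / a + c * √(π / a) := by
  set b := √N - c
  have hb : 0 ≤ b := sub_nonneg.mpr ((le_sqrt hc ((sq_nonneg c).trans hN)).mpr hN)
  have hN' : N = (b + c) ^ 2 := by rw [sub_add_cancel, sq_sqrt ((sq_nonneg c).trans hN)]
  have hsplit : ∫ u in (0 : ℝ)..b, 2 * (u + c) * exp (-a * u ^ 2)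
      = 2 * (∫ u in (0 : ℝ)..b, u * exp (-a * u ^ 2))
        + 2 * c * ∫ u in (0 : ℝ)..b, exp (-a * u ^ 2) := by
    rw [← intervalIntegral.integral_const_mul, ← intervalIntegral.integral_const_mul,
      ← intervalIntegral.integral_add]
    · congr 1 with u
      ring
    all_goals exact Continuous.intervalIntegrable (by fun_prop) _ _
  rw [hN', integral_comp_sqrt_sub (g := fun u => exp (-a * u ^ 2)) (by fun_prop) hb hc,
    hsplit]
  have h₁ := integral_mul_exp_neg_mul_sq_le ha b
  have h₂ := mul_le_mul_of_nonneg_left (integral_exp_neg_mul_sq_le ha hb)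
    (by positivity : 0 ≤ 2 * c)
  calc _ ≤ 2 * (1 / (2 * a)) + 2 * c * (√(π / a) / 2) := by linarith
    _ = 1 / a + c * √(π / a) := by field_simp

theorem antitoneOn_exp_neg_mul_sq_sqrt_sub {a c : ℝ} (ha : 0 ≤ a) (hc : 0 ≤ c) :
    AntitoneOn (fun x => exp (-a * (√x - c) ^ 2)) (Set.Ici (c ^ 2)) := by
  intro x hx y _ hxy
  have hcx : c ≤ √x := (le_sqrt hc ((sq_nonneg c).trans hx)).mpr hx
  have hxy' : √x ≤ √y := sqrt_le_sqrt hxy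
  have hsq : (√x - c) ^ 2 ≤ (√y - c) ^ 2 := pow_le_pow_left₀ (by linarith) (by linarith) 2
  simp only [exp_le_exp, neg_mul, neg_le_neg_iff]
  exact mul_le_mul_of_nonneg_left hsq ha

theorem tsum_exp_neg_mul_sq_sqrt_sub_le {a c : ℝ} (ha : 0 < a) (hc : 0 ≤ c) :
    ∑' n : {n : ℕ // ⌈c ^ 2⌉₊ ≤ n}, exp (-a * (√(n : ℕ) - c) ^ 2)
      ≤ 1 + (1 / a + c * √(π / a)) := by
  set f : ℝ → ℝ := fun x => exp (-a * (√x - c) ^ 2)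
  refine tsum_subtype_le_of_forall_sum_Icc_le (g := fun n : ℕ => f n)
    (fun n => (exp_pos _).le) fun N hN => ?_
  have hcm : c ^ 2 ≤ ⌈c ^ 2⌉₊ := Nat.le_ceil _
  have hmN : (⌈c ^ 2⌉₊ : ℝ) ≤ N := by exact_mod_cast hN
  have hsum := AntitoneOn.sum_Icc_le_add_integral hN
    ((antitoneOn_exp_neg_mul_sq_sqrt_sub ha.le hc).mono fun x hx => hcm.trans hx.1)
  have hfirst : f ⌈c ^ 2⌉₊ ≤ 1 :=
    exp_le_one_iff.mpr (by simp only [neg_mul, neg_nonpos]; positivity)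
  have hintegral : ∫ x in (⌈c ^ 2⌉₊ : ℝ)..N, f x ≤ ∫ x in c ^ 2..N, f x :=
    intervalIntegral.integral_mono_interval hcm hmN le_rfl
      (.of_forall fun _ => (exp_pos _).le) (Continuous.intervalIntegrable (by fun_prop) _ _)
  have htail := integral_exp_neg_mul_sq_sqrt_sub_le ha hc (hcm.trans hmN)
  linarith

/-- For all `δ > 0` and `γ ≥ 0`,
`∑_{n=⌈γ⌉}^∞ exp(−δ²·(√n − √γ)²/2) ≤ 1 + 2/δ² + √(2πγ)/δ`. -/
theorem stmt14 (δ γ : ℝ) (hδ : 0 < δ) (hγ : 0 ≤ γ) :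
    (∑' n : {n : ℕ // ⌈γ⌉₊ ≤ n},
        Real.exp (-(δ ^ 2 * (Real.sqrt ((n : ℕ) : ℝ) - Real.sqrt γ) ^ 2) / 2))
      ≤ 1 + 2 / δ ^ 2 + Real.sqrt (2 * Real.pi * γ) / δ := by
  obtain ⟨c, hc, rfl⟩ : ∃ c, 0 ≤ c ∧ γ = c ^ 2 := ⟨√γ, sqrt_nonneg γ, (sq_sqrt hγ).symm⟩
  have hexponent : ∀ x : ℝ,
      -(δ ^ 2 * (√x - √(c ^ 2)) ^ 2) / 2 = -(δ ^ 2 / 2) * (√x - c) ^ 2 := fun x => by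
    rw [sqrt_sq hc]
    ring
  have hconst : 2 / δ ^ 2 + √(2 * π * c ^ 2) / δ
      = 1 / (δ ^ 2 / 2) + c * √(π / (δ ^ 2 / 2)) := by
    rw [show π / (δ ^ 2 / 2) = 2 * π / δ ^ 2 by ring, sqrt_div' _ (sq_nonneg δ),
      sqrt_sq hδ.le, sqrt_mul' _ (sq_nonneg c), sqrt_sq hc]
    field_simp
  simp_rw [hexponent, add_assoc, hconst]
  exact tsum_exp_neg_mul_sq_sqrt_sub_le (by positivity) hc
end
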